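/- Let k,m ≥ 1, let a_1=1 and a_j≠0 for j=2,…,k+m, and let B be a constant real m×k matrix. For j=1,…,k let v_j ∈ C³((−∞,0]) and for j=k+1,…,k+m let v_j ∈ C³([0,+∞)), and assume v_j, v_j', v_j'' → 0 as x→−∞ (for j≤k) and as x→+∞ (for j>k), and that v_j''' v_j is integrable on each bond. Suppose the vertex conditions hold: a_j v_j(0)=v_1(0) for j=2,…,k+m; (v_{k+1}'(0),…,v_{k+m}'(0))ᵀ = B (v_1'(0),…,v_k'(0))ᵀ; and Σ_{j=1}^k (1/a_j)v_j''(0) = Σ_{j=k+1}^{k+m} (1/a_j)v_j''(0). Then Σ_{j=1}^k ∫_{−∞}^0 v_j'''(x)v_j(x)dx + Σ_{j=k+1}^{k+m} ∫_0^{+∞} v_j'''(x)v_j(x)dx = ½ (v⁻'(0))ᵀ(BᵀB − I_k)(v⁻'(0)), where v⁻'(0)=(v_1'(0),…,v_k'(0))ᵀ. -/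

import Mathlib

open MeasureTheory Real Filter Set Topology Matrix

/-- The closed `j`-th bond of the star graph with `k` incoming semi-infinite bonds
`(-∞,0]` and `m` outgoing semi-infinite bonds `[0,+∞)`. -/
def clBond (k m : ℕ) (j : Fin (k + m)) : Set ℝ :=
  if (j : ℕ) < k then Set.Iic 0 else Set.Ici 0

/-- The open `j`-th bond. -/
def inBond (k m : ℕ) (j : Fin (k + m)) : Set ℝ :=
  if (j : ℕ) < k then Set.Iio 0 else Set.Ioi 0

/-- The filter describing `x → ∓∞` along the `j`-th bond. -/
def bondEnd (k m : ℕ) (j : Fin (k + m)) : Filter ℝ :=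
  if (j : ℕ) < k then Filter.atBot else Filter.atTop

/-- First derivative along the `j`-th bond. -/
noncomputable def D1 (k m : ℕ) (v : Fin (k + m) → ℝ → ℝ) (j : Fin (k + m)) : ℝ → ℝ :=
  derivWithin (v j) (clBond k m j)

/-- Second derivative along the `j`-th bond. -/
noncomputable def D2 (k m : ℕ) (v : Fin (k + m) → ℝ → ℝ) (j : Fin (k + m)) : ℝ → ℝ :=
  derivWithin (D1 k m v j) (clBond k m j)

/-- Third derivative along the `j`-th bond. -/
noncomputable def D3 (k m : ℕ) (v : Fin (k + m) → ℝ → ℝ) (j : Fin (k + m)) : ℝ → ℝ :=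
  derivWithin (D2 k m v j) (clBond k m j)

/-!
On each bond `(u u'' - (u')²/2)' = u''' u`, so by the fundamental theorem of calculus and the
decay at infinity the integral of `u''' u` over an incoming bond is this boundary term at `0`,
and over an outgoing bond minus it. Since `a_j v_j(0) = v_1(0)` for all `j`, the sum of the
terms `v_j v_j''` at the vertex is `v_1(0)` times the difference of the two sides of the
Kirchhoff condition, hence vanishes; the squares of the first derivatives that remain form the
quadratic form `|B w|² - |w|²` in `w = v⁻'(0)`.
-/

noncomputable def ibpFlux (u : ℝ → ℝ) (s : Set ℝ) (x : ℝ) : ℝ :=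
  u x * derivWithin (derivWithin u s) s x - derivWithin u s x ^ 2 / 2

section IbpFlux

variable {u : ℝ → ℝ} {s : Set ℝ}

theorem hasDerivAt_ibpFlux (hs : UniqueDiffOn ℝ s) (hu : ContDiffOn ℝ 3 u s) {x : ℝ}
    (hx : s ∈ 𝓝 x) :
    HasDerivAt (ibpFlux u s)
      (derivWithin (derivWithin (derivWithin u s) s) s x * u x) x := by
  have hu₁ : ContDiffOn ℝ 2 (derivWithin u s) s := hu.derivWithin hs (by norm_num)
  have hu₂ : ContDiffOn ℝ 1 (derivWithin (derivWithin u s) s) s :=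
    hu₁.derivWithin hs (by norm_num)
  have hxs : x ∈ s := mem_of_mem_nhds hx
  have d₀ := ((hu.differentiableOn (by norm_num)) x hxs).hasDerivWithinAt.hasDerivAt hx
  have d₁ := ((hu₁.differentiableOn (by norm_num)) x hxs).hasDerivWithinAt.hasDerivAt hx
  have d₂ := ((hu₂.differentiableOn one_ne_zero) x hxs).hasDerivWithinAt.hasDerivAt hx
  refine ((d₀.mul d₂).sub ((d₁.pow 2).div_const 2)).congr_deriv ?_
  ring

theorem continuousOn_ibpFlux (hs : UniqueDiffOn ℝ s) (hu : ContDiffOn ℝ 3 u s) :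
    ContinuousOn (ibpFlux u s) s := by
  have hu₁ : ContDiffOn ℝ 2 (derivWithin u s) s := hu.derivWithin hs (by norm_num)
  have hu₂ : ContDiffOn ℝ 1 (derivWithin (derivWithin u s) s) s :=
    hu₁.derivWithin hs (by norm_num)
  exact (hu.continuousOn.mul hu₂.continuousOn).sub ((hu₁.continuousOn.pow 2).div_const 2)

theorem tendsto_ibpFlux {l : Filter ℝ} (h₀ : Tendsto u l (𝓝 0))
    (h₁ : Tendsto (derivWithin u s) l (𝓝 0))
    (h₂ : Tendsto (derivWithin (derivWithin u s) s) l (𝓝 0)) :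
    Tendsto (ibpFlux u s) l (𝓝 0) := by
  unfold ibpFlux
  simpa using (h₀.mul h₂).sub ((h₁.pow 2).div_const 2)

end IbpFlux

theorem integral_Iio_derivWithin_three_mul_self {u : ℝ → ℝ} (hu : ContDiffOn ℝ 3 u (Iic 0))
    (h₀ : Tendsto u atBot (𝓝 0))
    (h₁ : Tendsto (derivWithin u (Iic 0)) atBot (𝓝 0))
    (h₂ : Tendsto (derivWithin (derivWithin u (Iic 0)) (Iic 0)) atBot (𝓝 0))
    (hint : IntegrableOn
      (fun x => derivWithin (derivWithin (derivWithin u (Iic 0)) (Iic 0)) (Iic 0) x * u x)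
      (Iio 0)) :
    ∫ x in Iio 0, derivWithin (derivWithin (derivWithin u (Iic 0)) (Iic 0)) (Iic 0) x * u x =
      ibpFlux u (Iic 0) 0 := by
  rw [← integral_Iic_eq_integral_Iio,
    integral_Iic_of_hasDerivAt_of_tendsto
      (continuousOn_ibpFlux (uniqueDiffOn_Iic 0) hu 0 self_mem_Iic)
      (fun x hx => hasDerivAt_ibpFlux (uniqueDiffOn_Iic 0) hu (Iic_mem_nhds hx))
      ((integrableOn_Iic_iff_integrableOn_Iio).mpr hint) (tendsto_ibpFlux h₀ h₁ h₂), sub_zero]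

theorem integral_Ioi_derivWithin_three_mul_self {u : ℝ → ℝ} (hu : ContDiffOn ℝ 3 u (Ici 0))
    (h₀ : Tendsto u atTop (𝓝 0))
    (h₁ : Tendsto (derivWithin u (Ici 0)) atTop (𝓝 0))
    (h₂ : Tendsto (derivWithin (derivWithin u (Ici 0)) (Ici 0)) atTop (𝓝 0))
    (hint : IntegrableOn
      (fun x => derivWithin (derivWithin (derivWithin u (Ici 0)) (Ici 0)) (Ici 0) x * u x)
      (Ioi 0)) :
    ∫ x in Ioi 0, derivWithin (derivWithin (derivWithin u (Ici 0)) (Ici 0)) (Ici 0) x * u x =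
      -ibpFlux u (Ici 0) 0 := by
  rw [integral_Ioi_of_hasDerivAt_of_tendsto
      (continuousOn_ibpFlux (uniqueDiffOn_Ici 0) hu 0 self_mem_Ici)
      (fun x hx => hasDerivAt_ibpFlux (uniqueDiffOn_Ici 0) hu (Ici_mem_nhds hx))
      hint (tendsto_ibpFlux h₀ h₁ h₂), zero_sub]

section StarGraph

variable {k m : ℕ} {j : Fin (k + m)}

theorem clBond_of_lt (hj : (j : ℕ) < k) : clBond k m j = Iic 0 := if_pos hj
theorem inBond_of_lt (hj : (j : ℕ) < k) : inBond k m j = Iio 0 := if_pos hj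
theorem bondEnd_of_lt (hj : (j : ℕ) < k) : bondEnd k m j = atBot := if_pos hj
theorem clBond_of_le (hj : k ≤ j) : clBond k m j = Ici 0 := if_neg hj.not_gt
theorem inBond_of_le (hj : k ≤ j) : inBond k m j = Ioi 0 := if_neg hj.not_gt
theorem bondEnd_of_le (hj : k ≤ j) : bondEnd k m j = atTop := if_neg hj.not_gt

variable {v : Fin (k + m) → ℝ → ℝ}

theorem integral_Iio_D3_mul_self (hj : (j : ℕ) < k)
    (hs : ContDiffOn ℝ 3 (v j) (clBond k m j))
    (h₀ : Tendsto (v j) (bondEnd k m j) (𝓝 0))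
    (h₁ : Tendsto (D1 k m v j) (bondEnd k m j) (𝓝 0))
    (h₂ : Tendsto (D2 k m v j) (bondEnd k m j) (𝓝 0))
    (hint : IntegrableOn (fun x => D3 k m v j x * v j x) (inBond k m j)) :
    ∫ x in Iio 0, D3 k m v j x * v j x = v j 0 * D2 k m v j 0 - D1 k m v j 0 ^ 2 / 2 := by
  simp only [D3, D2, D1, clBond_of_lt hj, inBond_of_lt hj, bondEnd_of_lt hj] at *
  exact integral_Iio_derivWithin_three_mul_self hs h₀ h₁ h₂ hint

theorem integral_Ioi_D3_mul_self (hj : k ≤ j)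
    (hs : ContDiffOn ℝ 3 (v j) (clBond k m j))
    (h₀ : Tendsto (v j) (bondEnd k m j) (𝓝 0))
    (h₁ : Tendsto (D1 k m v j) (bondEnd k m j) (𝓝 0))
    (h₂ : Tendsto (D2 k m v j) (bondEnd k m j) (𝓝 0))
    (hint : IntegrableOn (fun x => D3 k m v j x * v j x) (inBond k m j)) :
    ∫ x in Ioi 0, D3 k m v j x * v j x = -(v j 0 * D2 k m v j 0 - D1 k m v j 0 ^ 2 / 2) := by
  simp only [D3, D2, D1, clBond_of_le hj, inBond_of_le hj, bondEnd_of_le hj] at *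
  exact integral_Ioi_derivWithin_three_mul_self hs h₀ h₁ h₂ hint

end StarGraph

theorem Finset.sum_mul_eq_mul_sum_one_div_mul {ι K : Type*} [Field K] (s : Finset ι)
    {a p q : ι → K} {c : K} (ha : ∀ i ∈ s, a i ≠ 0) (hp : ∀ i ∈ s, a i * p i = c) :
    ∑ i ∈ s, p i * q i = c * ∑ i ∈ s, 1 / a i * q i := by
  rw [Finset.mul_sum]
  refine Finset.sum_congr rfl fun i hi => ?_
  rw [← hp i hi]
  field_simp [ha i hi]

theorem Matrix.dotProduct_transpose_mul_self_sub_one_mulVec {R ι κ : Type*} [CommRing R]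
    [Fintype ι] [DecidableEq ι] [Fintype κ] (B : Matrix κ ι R) (w : ι → R) :
    w ⬝ᵥ (Bᵀ * B - 1) *ᵥ w = B *ᵥ w ⬝ᵥ B *ᵥ w - w ⬝ᵥ w := by
  rw [sub_mulVec, dotProduct_sub, one_mulVec, ← mulVec_mulVec, dotProduct_mulVec,
    vecMul_transpose]

theorem integration_by_parts_star_graph_general
    (k m : ℕ) (hk : 0 < k)
    (a : Fin (k + m) → ℝ) (ha : ∀ j, a j ≠ 0)
    (B : Matrix (Fin m) (Fin k) ℝ)
    (v : Fin (k + m) → ℝ → ℝ)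
    (hsmooth : ∀ j, ContDiffOn ℝ 3 (v j) (clBond k m j))
    (hdecay0 : ∀ j, Filter.Tendsto (v j) (bondEnd k m j) (nhds 0))
    (hdecay1 : ∀ j, Filter.Tendsto (D1 k m v j) (bondEnd k m j) (nhds 0))
    (hdecay2 : ∀ j, Filter.Tendsto (D2 k m v j) (bondEnd k m j) (nhds 0))
    (hint : ∀ j, MeasureTheory.IntegrableOn
      (fun x => D3 k m v j x * v j x) (inBond k m j))
    (hv1 : ∀ j : Fin (k + m), a j * v j 0 = v (Fin.castAdd m ⟨0, hk⟩) 0)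
    (hv2 : ∀ i : Fin m, D1 k m v (Fin.natAdd k i) 0 =
      ∑ j : Fin k, B i j * D1 k m v (Fin.castAdd m j) 0)
    (hv3 : ∑ j : Fin k, (1 / a (Fin.castAdd m j)) * D2 k m v (Fin.castAdd m j) 0 =
      ∑ i : Fin m, (1 / a (Fin.natAdd k i)) * D2 k m v (Fin.natAdd k i) 0) :
    (∑ j : Fin k, ∫ x in Set.Iio (0:ℝ),
        D3 k m v (Fin.castAdd m j) x * v (Fin.castAdd m j) x) +
      (∑ i : Fin m, ∫ x in Set.Ioi (0:ℝ),
        D3 k m v (Fin.natAdd k i) x * v (Fin.natAdd k i) x) =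
      (1/2) * ((fun j : Fin k => D1 k m v (Fin.castAdd m j) 0) ⬝ᵥ
        (B.transpose * B - 1).mulVec (fun j : Fin k => D1 k m v (Fin.castAdd m j) 0)) := by
  set w : Fin k → ℝ := fun j => D1 k m v (Fin.castAdd m j) 0
  have hBw : B *ᵥ w = fun i => D1 k m v (Fin.natAdd k i) 0 := funext fun i => (hv2 i).symm
  have hin (j : Fin k) := integral_Iio_D3_mul_self (j := Fin.castAdd m j) j.isLt
    (hsmooth _) (hdecay0 _) (hdecay1 _) (hdecay2 _) (hint _)
  have hout (i : Fin m) := integral_Ioi_D3_mul_self (j := Fin.natAdd k i) (by simp)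
    (hsmooth _) (hdecay0 _) (hdecay1 _) (hdecay2 _) (hint _)
  have hvertex : ∑ j : Fin k, v (Fin.castAdd m j) 0 * D2 k m v (Fin.castAdd m j) 0 =
      ∑ i : Fin m, v (Fin.natAdd k i) 0 * D2 k m v (Fin.natAdd k i) 0 := by
    rw [Finset.sum_mul_eq_mul_sum_one_div_mul _ (fun j _ => ha _) (fun j _ => hv1 _),
      Finset.sum_mul_eq_mul_sum_one_div_mul _ (fun i _ => ha _) (fun i _ => hv1 _), hv3]
  rw [dotProduct_transpose_mul_self_sub_one_mulVec, hBw]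
  simp only [hin, hout, dotProduct,
    Finset.sum_sub_distrib, Finset.sum_neg_distrib, ← Finset.sum_div, sq]
  linarith

/-- The integration-by-parts identity on the star graph used in the uniqueness proof:
under the vertex (Kirchhoff-type) conditions and decay at infinity,
`Σ_j ∫ v_j''' v_j = ½ (v⁻'(0))ᵀ (BᵀB − I_k) (v⁻'(0))`. -/
theorem integration_by_parts_star_graph
    (k m : ℕ) (hk : 0 < k) (hm : 0 < m)
    (a : Fin (k + m) → ℝ) (ha1 : a (Fin.castAdd m ⟨0, hk⟩) = 1) (ha : ∀ j, a j ≠ 0)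
    (B : Matrix (Fin m) (Fin k) ℝ)
    (v : Fin (k + m) → ℝ → ℝ)
    (hsmooth : ∀ j, ContDiffOn ℝ 3 (v j) (clBond k m j))
    (hdecay0 : ∀ j, Filter.Tendsto (v j) (bondEnd k m j) (nhds 0))
    (hdecay1 : ∀ j, Filter.Tendsto (D1 k m v j) (bondEnd k m j) (nhds 0))
    (hdecay2 : ∀ j, Filter.Tendsto (D2 k m v j) (bondEnd k m j) (nhds 0))
    (hint : ∀ j, MeasureTheory.IntegrableOn
      (fun x => D3 k m v j x * v j x) (inBond k m j))
    (hv1 : ∀ j : Fin (k + m), a j * v j 0 = v (Fin.castAdd m ⟨0, hk⟩) 0)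
    (hv2 : ∀ i : Fin m, D1 k m v (Fin.natAdd k i) 0 =
      ∑ j : Fin k, B i j * D1 k m v (Fin.castAdd m j) 0)
    (hv3 : ∑ j : Fin k, (1 / a (Fin.castAdd m j)) * D2 k m v (Fin.castAdd m j) 0 =
      ∑ i : Fin m, (1 / a (Fin.natAdd k i)) * D2 k m v (Fin.natAdd k i) 0) :
    (∑ j : Fin k, ∫ x in Set.Iio (0:ℝ),
        D3 k m v (Fin.castAdd m j) x * v (Fin.castAdd m j) x) +
      (∑ i : Fin m, ∫ x in Set.Ioi (0:ℝ),
        D3 k m v (Fin.natAdd k i) x * v (Fin.natAdd k i) x) =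
      (1/2) * ((fun j : Fin k => D1 k m v (Fin.castAdd m j) 0) ⬝ᵥ
        (B.transpose * B - 1).mulVec (fun j : Fin k => D1 k m v (Fin.castAdd m j) 0)) :=
  integration_by_parts_star_graph_general k m hk a ha B v hsmooth hdecay0 hdecay1 hdecay2 hint hv1
    hv2 hv3
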